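/- arXiv:2002.07757 — 5 statements merged into one kernel-verified Lean document; each statement's English description precedes it below -/
import Mathlib

section
/- For the lifted Euler states in 2D: given ρ, ρ̃ > 0 and u, ũ ∈ ℝ², define the symmetric 3×3 matrices Z = [[ρ, ρu₁, ρu₂],[ρu₁, ρu₁² + ρ², ρu₁u₂],[ρu₂, ρu₁u₂, ρu₂² + ρ²]] and Z̃ analogously. Then det(Z − Z̃) = (ρ² − ρ̃²)·( −ρρ̃((u₁−ũ₁)² + (u₂−ũ₂)²) + (ρ² − ρ̃²)(ρ − ρ̃) ). -/
/-- The matrix `Z` of the lifted state; its lower block `ρ u ⊗ u + ρ² I` is `U + q 𝔼₂` for `p(ρ) = ρ²`. -/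
def liftedEulerState {R : Type*} [CommRing R] (ρ : R) (u : R × R) : Matrix (Fin 3) (Fin 3) R :=
  Matrix.of ![![ρ, ρ * u.1, ρ * u.2],
              ![ρ * u.1, ρ * u.1 ^ 2 + ρ ^ 2, ρ * u.1 * u.2],
              ![ρ * u.2, ρ * u.1 * u.2, ρ * u.2 ^ 2 + ρ ^ 2]]

theorem det_liftedEulerState_sub {R : Type*} [CommRing R] (ρ σ : R) (u v : R × R) :
    (liftedEulerState ρ u - liftedEulerState σ v).det = (ρ ^ 2 - σ ^ 2) *
      (-(ρ * σ) * ((u.1 - v.1) ^ 2 + (u.2 - v.2) ^ 2) + (ρ ^ 2 - σ ^ 2) * (ρ - σ)) := by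
  rw [Matrix.det_fin_three]
  simp only [liftedEulerState, Matrix.sub_apply, Matrix.of_apply, Matrix.cons_val_zero,
    Matrix.cons_val_one, Matrix.cons_val_two, Matrix.head_cons, Matrix.tail_cons]
  ring

theorem det_lifted_states_general (ρ ρt : ℝ) (u ut : ℝ × ℝ) :
    let Z : Matrix (Fin 3) (Fin 3) ℝ :=
      Matrix.of ![![ρ, ρ * u.1, ρ * u.2],
                  ![ρ * u.1, ρ * u.1 ^ 2 + ρ ^ 2, ρ * u.1 * u.2],
                  ![ρ * u.2, ρ * u.1 * u.2, ρ * u.2 ^ 2 + ρ ^ 2]]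
    let Zt : Matrix (Fin 3) (Fin 3) ℝ :=
      Matrix.of ![![ρt, ρt * ut.1, ρt * ut.2],
                  ![ρt * ut.1, ρt * ut.1 ^ 2 + ρt ^ 2, ρt * ut.1 * ut.2],
                  ![ρt * ut.2, ρt * ut.1 * ut.2, ρt * ut.2 ^ 2 + ρt ^ 2]]
    (Z - Zt).det = (ρ ^ 2 - ρt ^ 2) *
      (-(ρ * ρt) * ((u.1 - ut.1) ^ 2 + (u.2 - ut.2) ^ 2) + (ρ ^ 2 - ρt ^ 2) * (ρ - ρt)) :=
  det_liftedEulerState_sub ρ ρt u ut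

/-- determinant identity for differences of lifted Euler states. -/
theorem det_lifted_states (ρ ρt : ℝ) (hρ : 0 < ρ) (hρt : 0 < ρt) (u ut : ℝ × ℝ) :
    let Z : Matrix (Fin 3) (Fin 3) ℝ :=
      Matrix.of ![![ρ, ρ * u.1, ρ * u.2],
                  ![ρ * u.1, ρ * u.1 ^ 2 + ρ ^ 2, ρ * u.1 * u.2],
                  ![ρ * u.2, ρ * u.1 * u.2, ρ * u.2 ^ 2 + ρ ^ 2]]
    let Zt : Matrix (Fin 3) (Fin 3) ℝ :=
      Matrix.of ![![ρt, ρt * ut.1, ρt * ut.2],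
                  ![ρt * ut.1, ρt * ut.1 ^ 2 + ρt ^ 2, ρt * ut.1 * ut.2],
                  ![ρt * ut.2, ρt * ut.1 * ut.2, ρt * ut.2 ^ 2 + ρt ^ 2]]
    (Z - Zt).det = (ρ ^ 2 - ρt ^ 2) *
      (-(ρ * ρt) * ((u.1 - ut.1) ^ 2 + (u.2 - ut.2) ^ 2) + (ρ ^ 2 - ρt ^ 2) * (ρ - ρt)) :=
  det_lifted_states_general ρ ρt u ut
end

section
/- With Z, Z̃ as above and ρ = ρ̃ > 0 arbitrary and any u, ũ ∈ ℝ², one has det(Z − Z̃) = 0. That is, two lifted Euler states with equal density are always wave-cone-connected (their difference matrix is singular). -/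
/-- lifted Euler states with equal density are wave-cone-connected. -/
theorem det_equal_density_vanishes (ρ : ℝ) (hρ : 0 < ρ) (u ut : ℝ × ℝ) :
    let Z : Matrix (Fin 3) (Fin 3) ℝ :=
      Matrix.of ![![ρ, ρ * u.1, ρ * u.2],
                  ![ρ * u.1, ρ * u.1 ^ 2 + ρ ^ 2, ρ * u.1 * u.2],
                  ![ρ * u.2, ρ * u.1 * u.2, ρ * u.2 ^ 2 + ρ ^ 2]]
    let Zt : Matrix (Fin 3) (Fin 3) ℝ :=
      Matrix.of ![![ρ, ρ * ut.1, ρ * ut.2],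
                  ![ρ * ut.1, ρ * ut.1 ^ 2 + ρ ^ 2, ρ * ut.1 * ut.2],
                  ![ρ * ut.2, ρ * ut.1 * ut.2, ρ * ut.2 ^ 2 + ρ ^ 2]]
    (Z - Zt).det = 0 := by
  intro Z Zt
  simp [Z, Zt, Matrix.det_fin_three, Matrix.sub_apply]
  ring
end

section
/- For constants ρ ≠ ρ̃, both positive, and u, ũ ∈ ℝ², det(Z − Z̃) = 0 if and only if |u − ũ|² = (ρ + ρ̃)(ρ − ρ̃)²/(ρρ̃). -/
/-- characterization of wave-cone-connectedness for distinct densities. -/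
theorem det_vanishes_iff (ρ ρt : ℝ) (hρ : 0 < ρ) (hρt : 0 < ρt) (hne : ρ ≠ ρt)
    (u ut : ℝ × ℝ) :
    let Z : Matrix (Fin 3) (Fin 3) ℝ :=
      Matrix.of ![![ρ, ρ * u.1, ρ * u.2],
                  ![ρ * u.1, ρ * u.1 ^ 2 + ρ ^ 2, ρ * u.1 * u.2],
                  ![ρ * u.2, ρ * u.1 * u.2, ρ * u.2 ^ 2 + ρ ^ 2]]
    let Zt : Matrix (Fin 3) (Fin 3) ℝ :=
      Matrix.of ![![ρt, ρt * ut.1, ρt * ut.2],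
                  ![ρt * ut.1, ρt * ut.1 ^ 2 + ρt ^ 2, ρt * ut.1 * ut.2],
                  ![ρt * ut.2, ρt * ut.1 * ut.2, ρt * ut.2 ^ 2 + ρt ^ 2]]
    ((Z - Zt).det = 0 ↔
      (u.1 - ut.1) ^ 2 + (u.2 - ut.2) ^ 2 = (ρ + ρt) * (ρ - ρt) ^ 2 / (ρ * ρt)) := by
  intro Z Zt
  have hdet : (Z - Zt).det =
      (ρ ^ 2 - ρt ^ 2) * (-(ρ * ρt) * ((u.1 - ut.1) ^ 2 + (u.2 - ut.2) ^ 2)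
        + (ρ ^ 2 - ρt ^ 2) * (ρ - ρt)) := by
    simp [Z, Zt, Matrix.det_fin_three, Matrix.sub_apply]
    ring
  rw [hdet]
  have h1 : ρ ^ 2 - ρt ^ 2 ≠ 0 := by
    have : ρ + ρt ≠ 0 := by positivity
    intro h
    apply hne
    have : (ρ - ρt) * (ρ + ρt) = 0 := by ring_nf; linarith [h]
    rcases mul_eq_zero.1 this with h' | h'
    · linarith
    · exact absurd h' ‹ρ + ρt ≠ 0›
  have h2 : ρ * ρt ≠ 0 := by positivity
  rw [mul_eq_zero]
  constructor
  · rintro (h | h)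
    · exact absurd h h1
    · field_simp
      nlinarith [h]
  · intro h
    right
    field_simp at h
    nlinarith [h]
end

section
/- For η ∈ (−2√2/3, 0), define ν̃₋(η) := −(14√2 + 29η + 6√2 η²)/(3η + 2√2)². Then ν̃₋(η) < −7/(2√2). -/
/-- the perturbed left fan speed lies below the unperturbed one. -/
theorem perturbed_left_speed (η : ℝ) (hη : η ∈ Set.Ioo (-(2 * Real.sqrt 2) / 3) 0) :
    -(14 * Real.sqrt 2 + 29 * η + 6 * Real.sqrt 2 * η ^ 2) / (3 * η + 2 * Real.sqrt 2) ^ 2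
      < -(7 / (2 * Real.sqrt 2)) := by
  obtain ⟨h1, h2⟩ := hη
  have hs : (0:ℝ) < Real.sqrt 2 := Real.sqrt_pos.2 (by norm_num)
  have hs2 : Real.sqrt 2 ^ 2 = 2 := Real.sq_sqrt (by norm_num)
  have hd : 0 < 3 * η + 2 * Real.sqrt 2 := by
    have : -(2 * Real.sqrt 2) / 3 < η := h1
    linarith
  rw [show -(7 / (2 * Real.sqrt 2)) = (-7) / (2 * Real.sqrt 2) by ring,
    div_lt_div_iff₀ (by positivity) (by positivity)]
  nlinarith [mul_pos (mul_pos (neg_pos.2 h2) hd) hs, mul_pos (neg_pos.2 h2) hd, hs2]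
end

section
/- The linear operator 𝒜_L defined by the three coefficient matrices A¹, A², A³ ∈ ℝ^{3×8} given by A¹ = [[1,0,0,0,0,0,0,0],[0,1,0,0,0,0,0,0],[0,0,1,0,0,0,0,0]], A² = [[0,1,0,0,0,0,0,0],[0,0,0,1,0,0,0,1],[0,0,0,0,1,0,0,0]], A³ = [[0,0,1,0,0,0,0,0],[0,0,0,0,1,0,0,0],[0,0,0,−1,0,0,0,1]] has the constant rank property: rank 𝔸_L(ξ) = 3 for every ξ ∈ ℝ³ with ξ ≠ 0, where 𝔸_L(ξ) = ξ₁A¹ + ξ₂A² + ξ₃A³. -/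
/-- If some 3×3 column-submatrix of a 3×8 real matrix has unit determinant,
the matrix has rank at least 3. -/
lemma rank_ge_three_of_submatrix (M : Matrix (Fin 3) (Fin 8) ℝ) (c : Fin 3 → Fin 8)
    (h : IsUnit (M.submatrix id c).det) : 3 ≤ M.rank := by
  have hmul : M * (1 : Matrix (Fin 8) (Fin 8) ℝ).submatrix (Equiv.refl (Fin 8)) c
      = M.submatrix id c := by
    rw [Matrix.mul_submatrix_one]
    rfl
  have h1 : (M.submatrix id c).rank = 3 := by
    rw [Matrix.rank_of_isUnit _ ((Matrix.isUnit_iff_isUnit_det _).mpr h)]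
    simp
  calc (3 : ℕ) = (M.submatrix id c).rank := h1.symm
    _ = (M * (1 : Matrix (Fin 8) (Fin 8) ℝ).submatrix (Equiv.refl (Fin 8)) c).rank := by
        rw [hmul]
    _ ≤ M.rank := Matrix.rank_mul_le_left _ _

/-- the linearized Euler operator has the constant rank property. -/
theorem linearized_euler_constant_rank :
    let A1 : Matrix (Fin 3) (Fin 8) ℝ :=
      Matrix.of ![![1,0,0,0,0,0,0,0], ![0,1,0,0,0,0,0,0], ![0,0,1,0,0,0,0,0]]
    let A2 : Matrix (Fin 3) (Fin 8) ℝ :=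
      Matrix.of ![![0,1,0,0,0,0,0,0], ![0,0,0,1,0,0,0,1], ![0,0,0,0,1,0,0,0]]
    let A3 : Matrix (Fin 3) (Fin 8) ℝ :=
      Matrix.of ![![0,0,1,0,0,0,0,0], ![0,0,0,0,1,0,0,0], ![0,0,0,-1,0,0,0,1]]
    ∀ ξ : Fin 3 → ℝ, ξ ≠ 0 → (ξ 0 • A1 + ξ 1 • A2 + ξ 2 • A3).rank = 3 := by
  intro A1 A2 A3 ξ hξ
  set M := ξ 0 • A1 + ξ 1 • A2 + ξ 2 • A3 with hM
  have hle : M.rank ≤ 3 := by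
    simpa using M.rank_le_card_height
  have hne : ξ 0 ≠ 0 ∨ ξ 1 ≠ 0 ∨ ξ 2 ≠ 0 := by
    by_contra hc
    push_neg at hc
    apply hξ
    funext i
    fin_cases i <;> simp [hc.1, hc.2.1, hc.2.2]
  have hge : 3 ≤ M.rank := by
    rcases hne with h0 | h1 | h2
    · apply rank_ge_three_of_submatrix M ![0, 1, 2]
      rw [Matrix.det_fin_three]
      simp [hM, A1, A2, A3, Matrix.submatrix, Matrix.add_apply, Matrix.smul_apply,
        Matrix.vecHead, Matrix.vecTail]
      exact h0
    · apply rank_ge_three_of_submatrix M ![1, 3, 4]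
      rw [Matrix.det_fin_three]
      simp [hM, A1, A2, A3, Matrix.submatrix, Matrix.add_apply, Matrix.smul_apply,
        Matrix.vecHead, Matrix.vecTail]
      ring_nf
      intro h
      have h' : ξ 1 * (ξ 1 ^ 2 + ξ 2 ^ 2) = 0 := by linear_combination h
      rcases mul_eq_zero.mp h' with h'' | h''
      · exact h1 h''
      · have hp : (0:ℝ) < ξ 1 ^ 2 := (sq_nonneg _).lt_of_ne (Ne.symm (pow_ne_zero 2 h1))
        nlinarith [sq_nonneg (ξ 2)]
    · apply rank_ge_three_of_submatrix M ![2, 3, 4]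
      rw [Matrix.det_fin_three]
      simp [hM, A1, A2, A3, Matrix.submatrix, Matrix.add_apply, Matrix.smul_apply,
        Matrix.vecHead, Matrix.vecTail]
      ring_nf
      intro h
      have h' : ξ 2 * (ξ 1 ^ 2 + ξ 2 ^ 2) = 0 := by linear_combination h
      rcases mul_eq_zero.mp h' with h'' | h''
      · exact h2 h''
      · have hp : (0:ℝ) < ξ 2 ^ 2 := (sq_nonneg _).lt_of_ne (Ne.symm (pow_ne_zero 2 h2))
        nlinarith [sq_nonneg (ξ 1)]
  omega
end
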